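/- arXiv:math/0301383 — 2 statements merged into one kernel-verified Lean document; each statement's English description precedes it below -/
import Mathlib

section
/- Let F : (0,∞) → ℝ be measurable with σ_F(x) := sup_{y ≥ x} |F(y)| finite for every x > 0 and integrable on (0,∞), and let x₀ ≥ 0 satisfy σ_{1F}(2x₀) < 1, where σ_{1F}(x) := ∫_x^∞ σ_F(y) dy. Then for every x ≥ x₀ there exists a unique function A_x ∈ L¹(x,∞) such that A_x(y) + ∫_x^∞ A_x(t) F(t+y) dt = −F(x+y) for almost every y ≥ x. -/
open MeasureTheory Set Filter

/-- `σ_F(x) := sup_{y ≥ x} |F(y)|`. -/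
noncomputable def sigmaF (F : ℝ → ℝ) (x : ℝ) : ℝ :=
  sSup ((fun y => |F y|) '' Set.Ici x)

/-! For `x ≥ x₀` the map `A ↦ -F(x + ·) - ∫_x^∞ A(t) F(t + ·) dt` is a contraction of
`L¹(x, ∞)`: by Fubini its Lipschitz constant is at most
`sup_{t > x} ∫_x^∞ |F(t + y)| dy ≤ sup_{t > x} ∫_{t+x}^∞ σ_F ≤ σ_{1F}(2x₀) < 1`.
Banach's fixed point theorem gives a solution, and it is the only one in `L¹` because every
integrable solution is a fixed point. -/

namespace MeasureTheory

section IntegralOperator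

variable {α : Type*} [MeasurableSpace α] {μ : Measure α} {K : α → α → ℝ} {k : ℝ}

noncomputable def integralOperator (μ : Measure α) (K : α → α → ℝ) (h : α → ℝ) (y : α) : ℝ :=
  ∫ t, h t * K t y ∂μ

theorem integralOperator_congr_ae {h₁ h₂ : α → ℝ} (h : h₁ =ᵐ[μ] h₂) :
    integralOperator μ K h₁ = integralOperator μ K h₂ :=
  funext fun _ => integral_congr_ae <| h.mono fun t ht => by simp only [ht]

structure IsL1BoundedKernel (μ : Measure α) (K : α → α → ℝ) (k : ℝ) : Prop where
  aestronglyMeasurable : AEStronglyMeasurable (Function.uncurry K) (μ.prod μ)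
  integrable_ae : ∀ᵐ t ∂μ, Integrable (K t) μ
  integral_norm_le_ae : ∀ᵐ t ∂μ, ∫ y, ‖K t y‖ ∂μ ≤ k

variable [SFinite μ]

theorem integrable_mul_kernel_prod (hK : IsL1BoundedKernel μ K k) {h : α → ℝ}
    (hh : Integrable h μ) :
    Integrable (fun z : α × α => h z.1 * K z.1 z.2) (μ.prod μ) := by
  have hm : AEStronglyMeasurable (fun z : α × α => h z.1 * K z.1 z.2) (μ.prod μ) :=
    hh.aestronglyMeasurable.comp_fst.mul hK.aestronglyMeasurable
  refine (integrable_prod_iff hm).2 ⟨hK.integrable_ae.mono fun t ht => ht.const_mul (h t), ?_⟩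
  refine (hh.norm.const_mul k).mono' hm.norm.integral_prod_right' ?_
  filter_upwards [hK.integral_norm_le_ae] with t ht
  rw [Real.norm_of_nonneg (integral_nonneg fun _ => norm_nonneg _)]
  simp only [norm_mul, integral_const_mul]
  rw [mul_comm k]
  exact mul_le_mul_of_nonneg_left ht (norm_nonneg _)

theorem integrable_integralOperator (hK : IsL1BoundedKernel μ K k) {h : α → ℝ}
    (hh : Integrable h μ) : Integrable (integralOperator μ K h) μ :=
  (integrable_mul_kernel_prod hK hh).integral_prod_right

theorem integralOperator_sub_ae (hK : IsL1BoundedKernel μ K k)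
    {h₁ h₂ : α → ℝ} (hh₁ : Integrable h₁ μ) (hh₂ : Integrable h₂ μ) :
    ∀ᵐ y ∂μ, integralOperator μ K (h₁ - h₂) y =
      integralOperator μ K h₁ y - integralOperator μ K h₂ y := by
  filter_upwards [(integrable_mul_kernel_prod hK hh₁).prod_left_ae,
    (integrable_mul_kernel_prod hK hh₂).prod_left_ae] with y hy₁ hy₂
  simp only [integralOperator, Pi.sub_apply, sub_mul]
  exact integral_sub hy₁ hy₂

theorem integral_norm_integralOperator_le (hK : IsL1BoundedKernel μ K k) {h : α → ℝ}
    (hh : Integrable h μ) :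
    ∫ y, ‖integralOperator μ K h y‖ ∂μ ≤ k * ∫ t, ‖h t‖ ∂μ := by
  have hprod := (integrable_mul_kernel_prod hK hh).norm
  calc ∫ y, ‖integralOperator μ K h y‖ ∂μ
      ≤ ∫ y, ∫ t, ‖h t * K t y‖ ∂μ ∂μ :=
        integral_mono (integrable_integralOperator hK hh).norm
          hprod.integral_prod_right fun y => norm_integral_le_integral_norm _
    _ = ∫ t, ‖h t‖ * ∫ y, ‖K t y‖ ∂μ ∂μ := by
        rw [← integral_integral_swap (f := fun t y => ‖h t * K t y‖) hprod]
        simp only [norm_mul, integral_const_mul]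
    _ ≤ ∫ t, k * ‖h t‖ ∂μ := by
        refine integral_mono_ae ?_ (hh.norm.const_mul k) ?_
        · simpa only [norm_mul, integral_const_mul] using hprod.integral_prod_left
        filter_upwards [hK.integral_norm_le_ae] with t ht
        rw [mul_comm k]
        exact mul_le_mul_of_nonneg_left ht (norm_nonneg _)
    _ = k * ∫ t, ‖h t‖ ∂μ := integral_const_mul k _

theorem integral_dist_integralOperator_le (hK : IsL1BoundedKernel μ K k)
    {h₁ h₂ : α → ℝ} (hh₁ : Integrable h₁ μ) (hh₂ : Integrable h₂ μ) :
    ∫ y, dist (integralOperator μ K h₁ y) (integralOperator μ K h₂ y) ∂μ ≤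
      k * ∫ t, dist (h₁ t) (h₂ t) ∂μ := by
  calc ∫ y, dist (integralOperator μ K h₁ y) (integralOperator μ K h₂ y) ∂μ
      = ∫ y, ‖integralOperator μ K (h₁ - h₂) y‖ ∂μ := by
        refine integral_congr_ae ?_
        filter_upwards [integralOperator_sub_ae hK hh₁ hh₂] with y hy
        rw [hy, dist_eq_norm]
    _ ≤ k * ∫ t, ‖(h₁ - h₂) t‖ ∂μ := integral_norm_integralOperator_le hK (hh₁.sub hh₂)
    _ = k * ∫ t, dist (h₁ t) (h₂ t) ∂μ := by simp only [Pi.sub_apply, dist_eq_norm]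

theorem existsUnique_ae_add_integralOperator_eq (hK : IsL1BoundedKernel μ K k)
    (hk₀ : 0 ≤ k) (hk : k < 1) {f : α → ℝ} (hf : Integrable f μ) :
    ∃ A : α → ℝ, Integrable A μ ∧ (∀ᵐ y ∂μ, A y + integralOperator μ K A y = f y) ∧
      ∀ B : α → ℝ, Integrable B μ → (∀ᵐ y ∂μ, B y + integralOperator μ K B y = f y) →
        B =ᵐ[μ] A := by
  have hT := fun g : α →₁[μ] ℝ => integrable_integralOperator hK (L1.integrable_coeFn g)
  let Φ : (α →₁[μ] ℝ) → (α →₁[μ] ℝ) := fun g => (hf.sub (hT g)).toL1 _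
  have hΦ_ae (g : α →₁[μ] ℝ) : Φ g =ᵐ[μ] f - integralOperator μ K g := Integrable.coeFn_toL1 _
  have hΦ : ContractingWith ⟨k, hk₀⟩ Φ := by
    refine ⟨hk, LipschitzWith.of_dist_le_mul fun g₁ g₂ => ?_⟩
    rw [L1.dist_eq_integral_dist, L1.dist_eq_integral_dist]
    calc ∫ y, dist (Φ g₁ y) (Φ g₂ y) ∂μ
        = ∫ y, dist (integralOperator μ K g₁ y) (integralOperator μ K g₂ y) ∂μ := by
          refine integral_congr_ae ?_
          filter_upwards [hΦ_ae g₁, hΦ_ae g₂] with y hy₁ hy₂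
          rw [hy₁, hy₂, Pi.sub_apply, Pi.sub_apply, dist_sub_left]
      _ ≤ k * ∫ t, dist (g₁ t) (g₂ t) ∂μ :=
          integral_dist_integralOperator_le hK (L1.integrable_coeFn g₁)
            (L1.integrable_coeFn g₂)
  have : Nonempty (α →₁[μ] ℝ) := ⟨0⟩
  set A := ContractingWith.fixedPoint Φ hΦ
  refine ⟨A, L1.integrable_coeFn A, ?_, fun B hB hBf => ?_⟩
  · have hA := hΦ_ae A
    rw [hΦ.fixedPoint_isFixedPt] at hA
    filter_upwards [hA] with y hy
    rw [hy, Pi.sub_apply, sub_add_cancel]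
  · have hB_fixed : Function.IsFixedPt Φ (hB.toL1 B) := by
      refine (Integrable.toL1_eq_toL1_iff _ _ _ _).2 ?_
      rw [integralOperator_congr_ae hB.coeFn_toL1]
      filter_upwards [hBf] with y hy
      rw [Pi.sub_apply, ← hy, add_sub_cancel_right]
    have hBA : hB.toL1 B = A := hΦ.fixedPoint_unique hB_fixed
    exact hB.coeFn_toL1.symm.trans (EventuallyEq.of_eq (congrArg (⇑) hBA))

end IntegralOperator

theorem measurePreserving_const_add_restrict_Ioi (c b : ℝ) :
    MeasurePreserving (c + ·) (volume.restrict (Ioi b)) (volume.restrict (Ioi (c + b))) := by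
  have h := (measurePreserving_add_left volume c).restrict_preimage_emb
    (MeasurableEquiv.addLeft c).measurableEmbedding (Ioi (c + b))
  rwa [preimage_const_add_Ioi, add_sub_cancel_left] at h

end MeasureTheory

section Marchenko

variable {F : ℝ → ℝ}

theorem abs_le_sigmaF {a y : ℝ} (hF : BddAbove ((fun y => |F y|) '' Ici a)) (hy : a ≤ y) :
    |F y| ≤ sigmaF F a :=
  le_csSup hF ⟨y, hy, rfl⟩

theorem sigmaF_nonneg {a : ℝ} (hF : BddAbove ((fun y => |F y|) '' Ici a)) : 0 ≤ sigmaF F a :=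
  (abs_nonneg _).trans (abs_le_sigmaF hF le_rfl)

theorem integrableOn_Ioi_comp_const_add (hFmeas : Measurable F)
    (hFbdd : ∀ x > (0 : ℝ), BddAbove ((fun y => |F y|) '' Ici x))
    (hσint : IntegrableOn (sigmaF F) (Ioi 0)) {c x : ℝ} (hcx : 0 ≤ c + x) :
    IntegrableOn (fun y => F (c + y)) (Ioi x) := by
  have hσ : IntegrableOn (fun y => sigmaF F (c + y)) (Ioi x) :=
    ((measurePreserving_const_add_restrict_Ioi c x).integrable_comp_emb
      (MeasurableEquiv.addLeft c).measurableEmbedding).2 (hσint.mono_set (Ioi_subset_Ioi hcx))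
  refine hσ.mono' (hFmeas.comp (measurable_const_add c)).aestronglyMeasurable ?_
  filter_upwards [ae_restrict_mem measurableSet_Ioi] with y hy
  exact abs_le_sigmaF (hFbdd _ (by linarith [mem_Ioi.1 hy])) le_rfl

theorem integral_abs_comp_const_add_le (hFmeas : Measurable F)
    (hFbdd : ∀ x > (0 : ℝ), BddAbove ((fun y => |F y|) '' Ici x))
    (hσint : IntegrableOn (sigmaF F) (Ioi 0)) {a c x : ℝ} (ha : 0 ≤ a) (hacx : a ≤ c + x) :
    ∫ y in Ioi x, |F (c + y)| ≤ ∫ y in Ioi a, sigmaF F y := by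
  have hemb := (MeasurableEquiv.addLeft c).measurableEmbedding
  have hmp := measurePreserving_const_add_restrict_Ioi c x
  have hσ : IntegrableOn (sigmaF F) (Ioi (c + x)) := hσint.mono_set (Ioi_subset_Ioi (ha.trans hacx))
  calc ∫ y in Ioi x, |F (c + y)|
      ≤ ∫ y in Ioi x, sigmaF F (c + y) := by
        refine setIntegral_mono_on
          (integrableOn_Ioi_comp_const_add hFmeas hFbdd hσint (ha.trans hacx)).abs
          ((hmp.integrable_comp_emb hemb).2 hσ) measurableSet_Ioi fun y hy => ?_
        exact abs_le_sigmaF (hFbdd _ (by linarith [mem_Ioi.1 hy])) le_rfl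
    _ = ∫ y in Ioi (c + x), sigmaF F y := hmp.integral_comp hemb (sigmaF F)
    _ ≤ ∫ y in Ioi a, sigmaF F y := by
        refine setIntegral_mono_set (hσint.mono_set (Ioi_subset_Ioi ha)) ?_
          (Ioi_subset_Ioi hacx).eventuallyLE
        filter_upwards [ae_restrict_mem measurableSet_Ioi] with y hy
        exact sigmaF_nonneg (hFbdd y (ha.trans_lt hy))

end Marchenko

/-- if `σ_F` is finite on `(0,∞)`, integrable there, and `σ_{1F}(2x₀) < 1`
for some `x₀ ≥ 0`, then for every `x ≥ x₀` the Marchenko equation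
`A(y) + ∫_x^∞ A(t) F(t+y) dt = −F(x+y)` (a.e. `y ≥ x`) has a unique solution `A ∈ L¹(x,∞)`
(unique up to a.e. equality). -/
theorem marchenko_unique_solution
    (F : ℝ → ℝ) (hFmeas : Measurable F)
    (hFbdd : ∀ x > (0 : ℝ), BddAbove ((fun y => |F y|) '' Set.Ici x))
    (hσint : IntegrableOn (sigmaF F) (Set.Ioi 0))
    (x₀ : ℝ) (hx₀ : 0 ≤ x₀)
    (hsmall : (∫ y in Set.Ioi (2 * x₀), sigmaF F y) < 1) :
    ∀ x ≥ x₀, ∃ A : ℝ → ℝ, IntegrableOn A (Set.Ioi x) ∧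
      (∀ᵐ y ∂(volume.restrict (Set.Ioi x)),
        A y + ∫ t in Set.Ioi x, A t * F (t + y) = -F (x + y)) ∧
      ∀ B : ℝ → ℝ, IntegrableOn B (Set.Ioi x) →
        (∀ᵐ y ∂(volume.restrict (Set.Ioi x)),
          B y + ∫ t in Set.Ioi x, B t * F (t + y) = -F (x + y)) →
        B =ᵐ[volume.restrict (Set.Ioi x)] A := by
  intro x hx
  have hKint : ∀ᵐ t ∂(volume.restrict (Ioi x)), IntegrableOn (fun y => F (t + y)) (Ioi x) := by
    filter_upwards [ae_restrict_mem measurableSet_Ioi] with t ht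
    exact integrableOn_Ioi_comp_const_add hFmeas hFbdd hσint (by linarith [mem_Ioi.1 ht])
  have hKk : ∀ᵐ t ∂(volume.restrict (Ioi x)),
      ∫ y in Ioi x, ‖F (t + y)‖ ≤ ∫ y in Ioi (2 * x₀), sigmaF F y := by
    filter_upwards [ae_restrict_mem measurableSet_Ioi] with t ht
    simpa only [Real.norm_eq_abs] using integral_abs_comp_const_add_le hFmeas hFbdd hσint
      (by positivity) (by linarith [mem_Ioi.1 ht])
  have hk₀ : 0 ≤ ∫ y in Ioi (2 * x₀), sigmaF F y :=
    setIntegral_nonneg measurableSet_Ioi fun y hy =>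
      sigmaF_nonneg (hFbdd y ((by positivity : (0 : ℝ) ≤ 2 * x₀).trans_lt hy))
  exact existsUnique_ae_add_integralOperator_eq (K := fun t y => F (t + y))
    ⟨(hFmeas.comp measurable_add).aestronglyMeasurable, hKint, hKk⟩ hk₀ hsmall
    (integrableOn_Ioi_comp_const_add hFmeas hFbdd hσint (by linarith)).neg
end

section
/- Let F : (0,∞) → ℝ be differentiable such that σ_F(x) := sup_{y ≥ x} |F(y)| is finite for all x > 0, monotonically nonincreasing, and integrable on (0,∞), and such that ∫_0^∞ y |F'(y)| dy < ∞. Fix x₀ ≥ 0 and 0 ≤ δ < 1 with σ_{1F}(2x₀) ≤ δ, where σ_{1F}(x) := ∫_x^∞ σ_F(y) dy, and set σ_{2F}(x) := ∫_x^∞ |F'(y)| dy. Suppose for every x ≥ x₀ a function g : [x₀,∞) → ℝ satisfies |g(x)| ≤ 2|F'(2x)| + c σ_F(2x)² + c σ_F(2x) σ_{2F}(2x) + c σ_{1F}(2x) σ_F(2x)² for some constant c > 0. Then ∫_{x₀}^∞ x |g(x)| dx < ∞. In particular, the potential q(x) := −2 Ȧ(x,x) recovered from the Marchenko kernel satisfies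 ∫_{x₀}^∞ x |q(x)| dx < ∞. -/
/-!
After multiplying the pointwise bound by `x`, every term is dominated by an integrable function
of `x`: `2x |F'(2x)|` is the weighted integrand at `2x`, and each of the other terms keeps one
factor `σ_F(2x)` while the weight `x` is absorbed by the rest. This works because `σ_F` is
nonincreasing, so `x σ_F(2x) ≤ ∫_x^{2x} σ_F ≤ ‖σ_F‖₁`, and because
`2x σ_{2F}(2x) ≤ ∫_0^∞ y |F'(y)| dy` and `σ_{1F}(2x) ≤ ‖σ_F‖₁`.
-/

open MeasureTheory Set Filter

-- Also when `|F|` is unbounded on `[x, ∞)`, since then `sSup` returns `0`.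
lemma sigmaF_nonneg_s7 (F : ℝ → ℝ) (x : ℝ) : 0 ≤ sigmaF F x :=
  Real.sSup_nonneg (by rintro _ ⟨y, -, rfl⟩; exact abs_nonneg _)

lemma AntitoneOn.mul_apply_two_mul_le_setIntegral_Ioi {f : ℝ → ℝ} (hmono : AntitoneOn f (Ioi 0))
    (hf : IntegrableOn f (Ioi 0)) (hf0 : ∀ y > 0, 0 ≤ f y) {x : ℝ} (hx : 0 < x) :
    x * f (2 * x) ≤ ∫ y in Ioi 0, f y := by
  have hsub : Ioc x (2 * x) ⊆ Ioi 0 := fun y hy => hx.trans hy.1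
  calc x * f (2 * x) = f (2 * x) * volume.real (Ioc x (2 * x)) := by
        rw [Real.volume_real_Ioc_of_le (by linarith)]; ring
    _ ≤ ∫ y in Ioc x (2 * x), f y :=
        setIntegral_ge_of_const_le_real measurableSet_Ioc (by simp)
          (fun y hy => hmono (hsub hy) (mem_Ioi.2 (by linarith)) hy.2) (hf.mono_set hsub)
    _ ≤ ∫ y in Ioi 0, f y :=
        setIntegral_mono_set hf (ae_restrict_of_forall_mem measurableSet_Ioi hf0)
          hsub.eventuallyLE

lemma setIntegral_Ioi_le_setIntegral_Ioi_zero {f : ℝ → ℝ} (hf : IntegrableOn f (Ioi 0))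
    (hf0 : ∀ y > 0, 0 ≤ f y) {a : ℝ} (ha : 0 ≤ a) :
    ∫ y in Ioi a, f y ≤ ∫ y in Ioi 0, f y :=
  setIntegral_mono_set hf (ae_restrict_of_forall_mem measurableSet_Ioi hf0)
    (Ioi_subset_Ioi ha).eventuallyLE

lemma integrableOn_Ioi_of_integrableOn_mul {f : ℝ → ℝ} {a : ℝ} (ha : 0 < a)
    (hf : IntegrableOn (fun y => y * f y) (Ioi a)) : IntegrableOn f (Ioi a) := by
  refine IntegrableOn.congr_fun (hf.bdd_mul (c := a⁻¹) measurable_inv.aestronglyMeasurable ?_)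
    (fun y (hy : a < y) => inv_mul_cancel_left₀ (ha.trans hy).ne' (f y)) measurableSet_Ioi
  filter_upwards [ae_restrict_mem measurableSet_Ioi] with y (hy : a < y)
  rw [norm_inv, Real.norm_of_nonneg (ha.trans hy).le]
  exact inv_anti₀ ha hy.le

lemma mul_setIntegral_Ioi_abs_le {f : ℝ → ℝ} (hf : IntegrableOn (fun y => y * |f y|) (Ioi 0))
    {a : ℝ} (ha : 0 < a) :
    a * ∫ y in Ioi a, |f y| ≤ ∫ y in Ioi 0, y * |f y| := by
  have hfa : IntegrableOn (fun y => y * |f y|) (Ioi a) := hf.mono_set (Ioi_subset_Ioi ha.le)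
  calc a * ∫ y in Ioi a, |f y| = ∫ y in Ioi a, a * |f y| := (integral_const_mul a _).symm
    _ ≤ ∫ y in Ioi a, y * |f y| :=
        setIntegral_mono_on ((integrableOn_Ioi_of_integrableOn_mul ha hfa).const_mul a) hfa
          measurableSet_Ioi fun y hy => mul_le_mul_of_nonneg_right (le_of_lt hy) (abs_nonneg _)
    _ ≤ ∫ y in Ioi 0, y * |f y| :=
        setIntegral_Ioi_le_setIntegral_Ioi_zero hf
          (fun y hy => mul_nonneg (le_of_lt hy) (abs_nonneg _)) ha.le

lemma IntegrableOn.comp_two_mul_Ioi_zero {f : ℝ → ℝ} (hf : IntegrableOn f (Ioi 0)) :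
    IntegrableOn (fun x => f (2 * x)) (Ioi 0) :=
  (integrableOn_Ioi_comp_mul_left_iff f 0 two_pos).2 (by simpa using hf)

lemma setLIntegral_ofReal_lt_top_of_le {f b : ℝ → ℝ} {s : Set ℝ} (hb : IntegrableOn b s)
    (hfb : ∀ x ∈ s, f x ≤ b x) (hs : MeasurableSet s) :
    ∫⁻ x in s, ENNReal.ofReal (f x) < ⊤ :=
  (setLIntegral_mono' hs fun x hx => ENNReal.ofReal_le_ofReal (hfb x hx)).trans_lt
    hb.setLIntegral_lt_top

noncomputable def diagonalBound (F F' : ℝ → ℝ) (c x : ℝ) : ℝ :=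
  2 * |F' (2 * x)| + c * (sigmaF F (2 * x)) ^ 2
    + c * sigmaF F (2 * x) * (∫ y in Ioi (2 * x), |F' y|)
    + c * (∫ y in Ioi (2 * x), sigmaF F y) * (sigmaF F (2 * x)) ^ 2

lemma mul_diagonalBound_le {F F' : ℝ → ℝ} (hmono : AntitoneOn (sigmaF F) (Ioi 0))
    (hσint : IntegrableOn (sigmaF F) (Ioi 0)) (hF'w : IntegrableOn (fun y => y * |F' y|) (Ioi 0))
    {c : ℝ} (hc : 0 ≤ c) {x : ℝ} (hx : 0 < x) :
    x * diagonalBound F F' c x ≤ 2 * x * |F' (2 * x)|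
      + c * ((∫ y in Ioi 0, sigmaF F y) + (∫ y in Ioi 0, y * |F' y|)
        + (∫ y in Ioi 0, sigmaF F y) ^ 2) * sigmaF F (2 * x) := by
  have hσ0 : ∀ y > 0, 0 ≤ sigmaF F y := fun y _ => sigmaF_nonneg_s7 F y
  have hxs := hmono.mul_apply_two_mul_le_setIntegral_Ioi hσint hσ0 hx
  have h2xI := mul_setIntegral_Ioi_abs_le hF'w (by linarith : 0 < 2 * x)
  have hJM := setIntegral_Ioi_le_setIntegral_Ioi_zero hσint hσ0 (by linarith : 0 ≤ 2 * x)
  have hJ : 0 ≤ ∫ y in Ioi (2 * x), sigmaF F y :=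
    setIntegral_nonneg measurableSet_Ioi fun y _ => sigmaF_nonneg_s7 F y
  have hI : 0 ≤ ∫ y in Ioi (2 * x), |F' y| :=
    setIntegral_nonneg measurableSet_Ioi fun y _ => abs_nonneg _
  set s := sigmaF F (2 * x)
  set J := ∫ y in Ioi (2 * x), sigmaF F y
  set I := ∫ y in Ioi (2 * x), |F' y|
  set M := ∫ y in Ioi 0, sigmaF F y
  set C := ∫ y in Ioi 0, y * |F' y|
  have hs : 0 ≤ s := sigmaF_nonneg_s7 F (2 * x)
  have hxI : x * I ≤ C := by nlinarith
  have hM : 0 ≤ M := hJ.trans hJM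
  calc x * diagonalBound F F' c x
      = 2 * x * |F' (2 * x)| + c * s * (x * s) + c * s * (x * I) + c * s * J * (x * s) := by
        unfold diagonalBound; ring
    _ ≤ 2 * x * |F' (2 * x)| + c * s * M + c * s * C + c * s * M * M := by gcongr
    _ = 2 * x * |F' (2 * x)| + c * (M + C + M ^ 2) * s := by ring

theorem weighted_integrability_of_diagonal_bound_general
    (F F' : ℝ → ℝ)
    (hmono : AntitoneOn (sigmaF F) (Set.Ioi 0))
    (hσint : IntegrableOn (sigmaF F) (Set.Ioi 0))
    (hF'w : IntegrableOn (fun y => y * |F' y|) (Set.Ioi 0))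
    (x₀ : ℝ) (hx₀ : 0 ≤ x₀)
    (g : ℝ → ℝ) (c : ℝ) (hc : 0 < c)
    (hg : ∀ x ≥ x₀, |g x| ≤ 2 * |F' (2 * x)| + c * (sigmaF F (2 * x)) ^ 2
      + c * sigmaF F (2 * x) * (∫ y in Set.Ioi (2 * x), |F' y|)
      + c * (∫ y in Set.Ioi (2 * x), sigmaF F y) * (sigmaF F (2 * x)) ^ 2) :
    (∫⁻ x in Set.Ioi x₀, ENNReal.ofReal (x * |g x|)) < ⊤ ∧
    ∀ q : ℝ → ℝ, (∀ x, q x = -2 * g x) →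
      (∫⁻ x in Set.Ioi x₀, ENNReal.ofReal (x * |q x|)) < ⊤ := by
  set M := ∫ y in Ioi 0, sigmaF F y
  set C := ∫ y in Ioi 0, y * |F' y|
  set B : ℝ → ℝ := fun x => 2 * x * |F' (2 * x)| + c * (M + C + M ^ 2) * sigmaF F (2 * x)
  have hB : IntegrableOn B (Ioi x₀) :=
    ((IntegrableOn.comp_two_mul_Ioi_zero hF'w).add
      ((IntegrableOn.comp_two_mul_Ioi_zero hσint).const_mul _)).mono_set (Ioi_subset_Ioi hx₀)
  have hgB : ∀ x ∈ Ioi x₀, x * |g x| ≤ B x := fun x (hx : x₀ < x) =>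
    (mul_le_mul_of_nonneg_left (hg x hx.le) (hx₀.trans hx.le)).trans
      (mul_diagonalBound_le hmono hσint hF'w hc.le (hx₀.trans_lt hx))
  refine ⟨setLIntegral_ofReal_lt_top_of_le hB hgB measurableSet_Ioi, fun q hq => ?_⟩
  refine setLIntegral_ofReal_lt_top_of_le (hB.const_mul 2) (fun x hx => ?_) measurableSet_Ioi
  have := hgB x hx
  rw [hq, abs_mul, abs_neg, abs_two]
  linarith

/-- if `σ_F` is finite, nonincreasing and integrable on `(0,∞)`,
`∫_0^∞ y|F'(y)| dy < ∞`, and `g` (playing the role of `Ȧ(x,x)`) satisfies the pointwise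
bound `|g(x)| ≤ 2|F'(2x)| + c σ_F(2x)² + c σ_F(2x) σ_{2F}(2x) + c σ_{1F}(2x) σ_F(2x)²`
for `x ≥ x₀`, then `∫_{x₀}^∞ x|g(x)| dx < ∞`; in particular the potential
`q = −2g` satisfies `∫_{x₀}^∞ x|q(x)| dx < ∞`. -/
theorem weighted_integrability_of_diagonal_bound
    (F F' : ℝ → ℝ) (hFderiv : ∀ y > (0 : ℝ), HasDerivAt F (F' y) y)
    (hFbdd : ∀ x > (0 : ℝ), BddAbove ((fun y => |F y|) '' Set.Ici x))
    (hmono : AntitoneOn (sigmaF F) (Set.Ioi 0))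
    (hσint : IntegrableOn (sigmaF F) (Set.Ioi 0))
    (hF'w : IntegrableOn (fun y => y * |F' y|) (Set.Ioi 0))
    (x₀ δ : ℝ) (hx₀ : 0 ≤ x₀) (hδ0 : 0 ≤ δ) (hδ1 : δ < 1)
    (hsmall : (∫ y in Set.Ioi (2 * x₀), sigmaF F y) ≤ δ)
    (g : ℝ → ℝ) (c : ℝ) (hc : 0 < c)
    (hg : ∀ x ≥ x₀, |g x| ≤ 2 * |F' (2 * x)| + c * (sigmaF F (2 * x)) ^ 2
      + c * sigmaF F (2 * x) * (∫ y in Set.Ioi (2 * x), |F' y|)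
      + c * (∫ y in Set.Ioi (2 * x), sigmaF F y) * (sigmaF F (2 * x)) ^ 2) :
    (∫⁻ x in Set.Ioi x₀, ENNReal.ofReal (x * |g x|)) < ⊤ ∧
    ∀ q : ℝ → ℝ, (∀ x, q x = -2 * g x) →
      (∫⁻ x in Set.Ioi x₀, ENNReal.ofReal (x * |q x|)) < ⊤ :=
  weighted_integrability_of_diagonal_bound_general F F' hmono hσint hF'w x₀ hx₀ g c hc hg
end
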